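/- Suppose D is a countably complete ultrafilter on an ordinal γ and A' ∈ M_D is a set of ordinals such that A' ⊇ j_D[γ^+] and A' is closed under j_D(f) for every f : λ → λ (where γ < λ). Then [id]_D ∈ A'. -/

import Mathlib

open FirstOrder

namespace UAPaper

open Cardinal

/-- The universe of sets. -/
abbrev ZS : Type 1 := ZFSet.{0}

/-! ### The first-order language of set theory (one binary relation) -/

def setLang : Language where
  Functions := fun _ => Empty
  Relations := fun n => match n with | 2 => PUnit | _ => Empty

def setStructure (α : Type*) (r : α → α → Prop) : setLang.Structure α where
  funMap := fun f _ => f.elim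
  RelMap := fun {n} R v =>
    match n, R, v with
    | 2, _, v => r (v 0) (v 1)

/-- `j : α → β` is elementary with respect to the membership-like relations
`ra` and `rb`: it preserves the truth of all first-order formulas in the
language of set theory. -/
def ElemOn {α β : Type*} (ra : α → α → Prop) (rb : β → β → Prop) (j : α → β) : Prop :=
  letI := setStructure α ra
  letI := setStructure β rb
  ∀ (n : ℕ) (φ : setLang.Formula (Fin n)) (v : Fin n → α),
    φ.Realize (j ∘ v) ↔ φ.Realize v

/-! ### ZFSet-coded basics -/

/-- `x` is a (von Neumann) ordinal. -/
def IsOrd (x : ZS) : Prop := x.IsTransitive ∧ ∀ y ∈ x, ZFSet.IsTransitive y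

/-- ordinal comparison `a ≤ b`. -/
def zle (a b : ZS) : Prop := a ∈ b ∨ a = b

/-- `x` is a cardinal: an ordinal not in bijection with any smaller ordinal. -/
def IsCardZ (x : ZS) : Prop := IsOrd x ∧ ∀ y ∈ x, #y.toSet < #x.toSet

/-- `b` is the cardinal successor of `a`. -/
def CardSuccOf (a b : ZS) : Prop := IsCardZ b ∧ #b.toSet = Order.succ #a.toSet

/-- The cofinality of the ordinal `δ` is at least `#κ`: every cofinal subset of `δ`
has cardinality at least that of `κ`. -/
def CofGE (δ κ : ZS) : Prop :=
  ∀ s : Set ZS, (∀ x ∈ s, x ∈ δ) → (∀ x, x ∈ δ → ∃ y ∈ s, x ∈ y ∨ x = y) →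
    #κ.toSet ≤ #s

/-- The cofinality of the ordinal `α` is exactly (the cardinality of) `κ`. -/
def CofEq (α κ : ZS) : Prop :=
  CofGE α κ ∧ ∃ s : Set ZS, (∀ x ∈ s, x ∈ α) ∧
    (∀ x, x ∈ α → ∃ y ∈ s, x ∈ y ∨ x = y) ∧ #s ≤ #κ.toSet

/-- `F` is a (set-coded) function with domain `A`. -/
def IsFunc (F A : ZS) : Prop :=
  (∀ p ∈ F, ∃ x, x ∈ A ∧ ∃ y, p = ZFSet.pair x y) ∧
  ∀ x, x ∈ A → ∃! y, ZFSet.pair x y ∈ F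

/-- `F` is a set-coded function from `A` to `B`. -/
def IsFuncTo (F A B : ZS) : Prop :=
  IsFunc F A ∧ ∀ x y, ZFSet.pair x y ∈ F → y ∈ B

/-- The set-coded constant function on `A` with value `v`. -/
noncomputable def constFn (A v : ZS) : ZS :=
  @ZFSet.image (fun x => ZFSet.pair x v) (Classical.allZFSetDefinable _) A

/-- The image `j[A]` of a set `A` under a class function `j`. -/
noncomputable def zimage (j : ZS → ZS) (A : ZS) : ZS :=
  @ZFSet.image j (Classical.allZFSetDefinable _) A

/-- A class `M` is transitive. -/
def IsTransClass (M : ZS → Prop) : Prop := ∀ x, M x → ∀ y ∈ x, M y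

/-- `M` (a class) is closed under `λ`-sequences: every set function with domain `lam`
taking values in `M` belongs to `M`.  (`M^λ ⊆ M`.) -/
def ClosedUnderSeq (M : ZS → Prop) (lam : ZS) : Prop :=
  ∀ F, IsFunc F lam → (∀ x y, ZFSet.pair x y ∈ F → M y) → M F

/-! ### Set-coded ultrafilters and ultrapowers -/

/-- `D` is an ultrafilter on the set `A`. -/
structure IsUF (D A : ZS) : Prop where
  subsets : ∀ X ∈ D, X ⊆ A
  univ_mem : A ∈ D
  empty_not_mem : ∅ ∉ D
  inter_mem : ∀ X ∈ D, ∀ Y ∈ D, X ∩ Y ∈ D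
  superset_mem : ∀ X ∈ D, ∀ Y, X ⊆ Y → Y ⊆ A → Y ∈ D
  total : ∀ X, X ⊆ A → X ∈ D ∨ A \ X ∈ D

/-- `D` is a countably complete ultrafilter on `A`. -/
def IsCCUF (D A : ZS) : Prop :=
  IsUF D A ∧ ∀ s : ℕ → ZS, (∀ n, s n ∈ D) →
    ZFSet.sep (fun x => ∀ n, x ∈ s n) A ∈ D

/-- `D` is `κ`-complete on `A`. -/
def IsKComplete (D A κ : ZS) : Prop :=
  ∀ s : Set ZS, (∀ X ∈ s, X ∈ D) → #s < #κ.toSet →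
    ZFSet.sep (fun x => ∀ X ∈ s, x ∈ X) A ∈ D

/-- Functions (in `V`) with domain the set `A`. -/
def Fn (A : ZS) : Type 1 := {x : ZS // x ∈ A} → ZS

/-- The `D`-large set where `f` and `g` agree. -/
def agreeSet (A : ZS) (f g : Fn A) : ZS :=
  ZFSet.sep (fun x => ∀ h : x ∈ A, f ⟨x, h⟩ = g ⟨x, h⟩) A

/-- The `D`-large set where `f x ∈ g x`. -/
def memSet (A : ZS) (f g : Fn A) : ZS :=
  ZFSet.sep (fun x => ∀ h : x ∈ A, f ⟨x, h⟩ ∈ g ⟨x, h⟩) A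

/-- The ultrapower of the universe `V` by the coded ultrafilter `D` on `A`,
formed using all functions with domain `A`. -/
def Ult (D A : ZS) : Type 1 := Quot (fun f g : Fn A => agreeSet A f g ∈ D)

/-- Membership between elements of the ultrapower. -/
def memUlt (D A : ZS) (a b : Ult D A) : Prop :=
  ∃ f g : Fn A, a = Quot.mk _ f ∧ b = Quot.mk _ g ∧ memSet A f g ∈ D

/-- The canonical ultrapower embedding `j_D : V → M_D` (at the quotient level). -/
def jUlt (D A : ZS) (x : ZS) : Ult D A := Quot.mk _ fun _ => x

/-- `[id]_D`, the element of the ultrapower represented by the identity function. -/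
def idUlt (D A : ZS) : Ult D A := Quot.mk _ fun p => p.1

/-- `F` is a set-code for the function `f : A → V`. -/
def CodesFn (F A : ZS) (f : Fn A) : Prop :=
  (∀ p ∈ F, ∃ x, ∃ h : x ∈ A, p = ZFSet.pair x (f ⟨x, h⟩)) ∧
  ∀ x, ∀ h : x ∈ A, ZFSet.pair x (f ⟨x, h⟩) ∈ F

/-- `RepIn M D A a f` : the set `a` is the transitive collapse of the point of the
ultrapower of `M` by `D` (using functions coded in `M`) represented by `f`.
Defined by ∈-recursion.  Taking `M = V` (i.e. `fun _ => True`) gives the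
full ultrapower of the universe. -/
def RepIn (M : ZS → Prop) (D A : ZS) : ZS → Fn A → Prop :=
  ZFSet.mem_wf.fix
    (C := fun _ => Fn A → Prop)
    (fun a rec f =>
      (∀ b, ∀ hb : b ∈ a, ∃ g : Fn A, (∃ G, M G ∧ CodesFn G A g) ∧
        memSet A g f ∈ D ∧ rec b hb g) ∧
      (∀ g : Fn A, (∃ G, M G ∧ CodesFn G A g) → memSet A g f ∈ D →
        ∃ b, ∃ hb : b ∈ a, rec b hb g))

/-- `a` is the collapse of the point of `M_D = Ult(V, D)` represented by `f`. -/
def Rep (D A : ZS) (a : ZS) (f : Fn A) : Prop :=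
  RepIn (fun _ => True) D A a f

/-- The class `M_D`: the transitive collapse of the ultrapower of `V` by `D`. -/
def InUlt (D A : ZS) (a : ZS) : Prop := ∃ f : Fn A, Rep D A a f

/-- Membership relation on (the subclass of `V` given by) a class `M`. -/
def ClassMem (M : ZS → Prop) : {x : ZS // M x} → {x : ZS // M x} → Prop :=
  fun a b => a.1 ∈ b.1

/-- `i` restricts to an elementary embedding from the class `M` to the class `N`. -/
def IsElemClassEmb (M N : ZS → Prop) (i : ZS → ZS) : Prop :=
  ∃ h : ∀ x, M x → N (i x),
    ElemOn (ClassMem M) (ClassMem N) (fun a => ⟨i a.1, h a.1 a.2⟩)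

/-- `i : M → N` is an internal ultrapower embedding of the (transitive) class `M`:
there are `A, D ∈ M` with `D` a countably complete ultrafilter on `A` such that
`N` is the (collapsed) ultrapower of `M` by `D` computed using functions in `M`,
and `i` is the associated canonical embedding. -/
def IsInternalUltrapowerEmb (M N : ZS → Prop) (i : ZS → ZS) : Prop :=
  ∃ A D : ZS, M A ∧ M D ∧ IsCCUF D A ∧
    (∀ a, N a ↔ ∃ f : Fn A, (∃ G, M G ∧ CodesFn G A f) ∧ RepIn M D A a f) ∧
    (∀ x, M x → RepIn M D A (i x) (fun _ => x))

/-- `j : V → M` is an ultrapower embedding of the universe by a countably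
complete ultrafilter. -/
def IsUltrapowerEmbV (M : ZS → Prop) (j : ZS → ZS) : Prop :=
  IsInternalUltrapowerEmb (fun _ => True) M j

/-- `(i0, i1) : (M0, M1) → N` is a semicomparison of `(j0 : V → M0, j1 : V → M1)`:
`i0` is elementary, `i1` is an internal ultrapower embedding of `M1`, and
`i0 ∘ j0 = i1 ∘ j1`. -/
structure Semicomparison (M0 M1 N : ZS → Prop) (j0 j1 i0 i1 : ZS → ZS) : Prop where
  elem0 : IsElemClassEmb M0 N i0
  internal1 : IsInternalUltrapowerEmb M1 N i1
  comm : ∀ x, i0 (j0 x) = i1 (j1 x)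

/-- A comparison of `(j0, j1)` : both `(i0,i1)` and `(i1,i0)` are semicomparisons. -/
def Comparison (M0 M1 N : ZS → Prop) (j0 j1 i0 i1 : ZS → ZS) : Prop :=
  Semicomparison M0 M1 N j0 j1 i0 i1 ∧ Semicomparison M1 M0 N j1 j0 i1 i0

/-- The Ultrapower Axiom: every pair of ultrapower embeddings admits a comparison. -/
def UA : Prop :=
  ∀ (M0 M1 : ZS → Prop) (j0 j1 : ZS → ZS),
    IsUltrapowerEmbV M0 j0 → IsUltrapowerEmbV M1 j1 →
    ∃ (N : ZS → Prop) (i0 i1 : ZS → ZS),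
      Comparison M0 M1 N j0 j1 i0 i1

/-! ### Supercompactness and normal fine ultrafilters -/

/-- An elementary embedding of `V` into a transitive class `M`. -/
def IsElemEmbV (M : ZS → Prop) (j : ZS → ZS) : Prop :=
  IsTransClass M ∧ IsElemClassEmb (fun _ => True) M j

/-- `κ` is `lam`-supercompact: there is an elementary `j : V → M` with critical
point `κ`, `j(κ) > lam`, and `M` closed under `lam`-sequences. -/
def IsSupercompact (κ lam : ZS) : Prop :=
  ∃ (M : ZS → Prop) (j : ZS → ZS), IsElemEmbV M j ∧
    (∀ x ∈ κ, j x = x) ∧ κ ∈ j κ ∧ lam ∈ j κ ∧ ClosedUnderSeq M lam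

/-- `P_κ(δ)` : the set of subsets of `δ` of cardinality less than `κ`. -/
noncomputable def Pk (κ δ : ZS) : ZS :=
  ZFSet.sep (fun x => #x.toSet < #κ.toSet) (ZFSet.powerset δ)

/-- `D` is a normal fine `κ`-complete ultrafilter on `P_κ(δ)`. -/
structure IsNFUF (D κ δ : ZS) : Prop where
  uf : IsUF D (Pk κ δ)
  cc : IsCCUF D (Pk κ δ)
  kcomplete : IsKComplete D (Pk κ δ) κ
  fine : ∀ α ∈ δ, ZFSet.sep (fun σ => α ∈ σ) (Pk κ δ) ∈ D
  normal : ∀ f : ZS → ZS,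
    ZFSet.sep (fun σ => f σ ∈ σ) (Pk κ δ) ∈ D →
    ∃ α ∈ δ, ZFSet.sep (fun σ => f σ = α) (Pk κ δ) ∈ D

end UAPaper

namespace UAPaper

open Cardinal

/-- `D` is uniform on `A`: every member has full cardinality. -/
def UniformOn (D A : ZS) : Prop := ∀ X ∈ D, #X.toSet = #A.toSet

/-- A uniform ultrafilter `D` on the cardinal `μ` is seed-minimal if no regressive
function is one-to-one on a `D`-large set. -/
def SeedMinimal (D μ : ZS) : Prop :=
  ∀ f : ZS → ZS, (∀ x, x ∈ μ → x ≠ ∅ → f x ∈ x) →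
    ∀ X ∈ D, ¬ Set.InjOn f X.toSet

/-- `D` (on `A`) and `E` (on `B`) are isomorphic in the Rudin–Keisler sense, via a
map which is a bijection between sets in the respective ultrafilters. -/
def UFIso (D A E B : ZS) : Prop :=
  ∃ (h : ZS → ZS) (X Y : ZS), X ∈ D ∧ Y ∈ E ∧
    Set.BijOn h X.toSet Y.toSet ∧
    ∀ Z : ZS, Z ⊆ B → (Z ∈ E ↔ ZFSet.sep (fun x => h x ∈ Z) A ∈ D)

/-! ### Clubs, stationary sets and diamond -/

/-- A club subset of the (ZFSet) ordinal `lam`. -/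
def ZClub (lam : ZS) (C : Set ZS) : Prop :=
  (∀ x ∈ C, x ∈ lam) ∧
  (∀ x, x ∈ lam → ∃ y ∈ C, x ∈ y ∨ x = y) ∧
  (∀ β, β ∈ lam → β ≠ ∅ → (∀ z ∈ β, ∃ y ∈ C, y ∈ β ∧ (z ∈ y ∨ z = y)) → β ∈ C)

/-- A stationary subset of the (ZFSet) ordinal `lam`. -/
def ZStationary (lam : ZS) (S : Set ZS) : Prop :=
  (∀ x ∈ S, x ∈ lam) ∧ ∀ C, ZClub lam C → (S ∩ C).Nonempty

/-- Jensen's diamond on the set `S ⊆ lam` (for ZFSet ordinals). -/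
def ZDiamond (lam : ZS) (S : Set ZS) : Prop :=
  ∃ A : ZS → ZS, (∀ α, α ∈ S → A α ⊆ α) ∧
    ∀ X : ZS, X ⊆ lam → ZStationary lam {α | α ∈ S ∧ X ∩ α = A α}

/-- A club subset of the ordinal `lam` (Mathlib ordinals). -/
def IsClub (lam : Ordinal) (C : Set Ordinal) : Prop :=
  (∀ α ∈ C, α < lam) ∧
  (∀ α, α < lam → ∃ β ∈ C, α < β) ∧
  (∀ β, β < lam → 0 < β → (∀ γ, γ < β → ∃ δ ∈ C, γ < δ ∧ δ < β) → β ∈ C)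

/-- A stationary subset of the ordinal `lam`. -/
def IsStationary (lam : Ordinal) (S : Set Ordinal) : Prop :=
  (∀ α ∈ S, α < lam) ∧ ∀ C, IsClub lam C → (S ∩ C).Nonempty

/-- Jensen's diamond principle `◇(S)` for `S ⊆ lam`. -/
def Diamond (lam : Ordinal) (S : Set Ordinal) : Prop :=
  ∃ A : Ordinal → Set Ordinal, (∀ α ∈ S, A α ⊆ Set.Iio α) ∧
    ∀ X : Set Ordinal, X ⊆ Set.Iio lam →
      IsStationary lam {α ∈ S | X ∩ Set.Iio α = A α}

/-- Kunen's `◇⁻(S)` for `S ⊆ lam`. -/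
def DiamondMinus (lam : Ordinal) (S : Set Ordinal) : Prop :=
  ∃ 𝒜 : Ordinal → Set (Set Ordinal),
    (∀ α ∈ S, ∀ a ∈ 𝒜 α, a ⊆ Set.Iio α) ∧
    (∀ α ∈ S, #(𝒜 α) ≤ #(Set.Iio α)) ∧
    ∀ X : Set Ordinal, X ⊆ Set.Iio lam →
      IsStationary lam {α ∈ S | X ∩ Set.Iio α ∈ 𝒜 α}

end UAPaper

/-! Write `A' = [p ↦ A_p]_D`. Since `j_D(x) ∈ A'` for every `x < γ⁺`, each `x < γ⁺` lies in `A_p`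
for `D`-almost all `p`. If `γ` is countable, countable completeness makes `D` principal and
`[id]_D = j_D(α)` for some `α < γ`. Otherwise a counting argument shows `|A_p ∩ γ⁺| > |γ|` for
`D`-almost all `p`, so a transfinite recursion along `γ` picks `g(p) ∈ A_p ∩ γ⁺` injectively. Then
`[g]_D ∈ A'`, and for a left inverse `f : λ → λ` of `g` we get `j_D(f)([g]_D) = [id]_D ∈ A'`. -/

open Cardinal Filter

universe u

theorem Ultrafilter.exists_eq_pure_of_countable {α : Type*} [Countable α] (U : Ultrafilter α)
    [CountableInterFilter (U : Filter α)] : ∃ a, U = pure a := by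
  refine U.le_cofinite_or_eq_pure.resolve_left fun hU => ?_
  have hne : ∀ᶠ x in (U : Filter α), ∀ a, x ≠ a :=
    eventually_countable_forall.2 fun a => hU (Set.finite_singleton a).compl_mem_cofinite
  obtain ⟨x, hx⟩ := hne.exists
  exact hx x rfl

theorem Ultrafilter.eventually_lt_mk_of_forall_mem {ι α : Type u} (U : Ultrafilter ι)
    {κ : Cardinal} (hκ : ℵ₀ ≤ κ) (hι : #ι ≤ κ) {S : Set α} (hS : κ < #S) {B : ι → Set α}
    (hB : ∀ x ∈ S, ∀ᶠ i in U, x ∈ B i) : ∀ᶠ i in U, κ < #(B i) := by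
  by_contra hlarge
  have hsmall : ∀ᶠ i in U, #(B i) ≤ κ := by
    simpa only [not_lt] using Ultrafilter.eventually_not.2 hlarge
  set T := ⋃ i : {i // #(B i) ≤ κ}, B i
  have hT : #T ≤ κ := by
    refine (mk_iUnion_le _).trans ?_
    calc _ ≤ κ * κ := mul_le_mul' ((mk_subtype_le _).trans hι) (ciSup_le' fun i => i.2)
      _ = κ := mul_eq_self hκ
  obtain ⟨x, hxS, hxT⟩ : (S \ T).Nonempty :=
    Set.sdiff_nonempty.2 fun hST => (mk_le_mk_of_subset hST |>.trans hT).not_gt hS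
  obtain ⟨i, hi, hxi⟩ := (hsmall.and (hB x hxS)).exists
  exact hxT (Set.mem_iUnion.2 ⟨⟨i, hi⟩, hxi⟩)

theorem exists_injOn_mem_of_mk_lt {ι α : Type u} (r : ι → ι → Prop) [IsWellOrder ι r]
    [Nonempty α] (B : ι → Set α) :
    ∃ g : ι → α, Set.InjOn g {i | #{j // r j i} < #(B i)} ∧
      ∀ i, #{j // r j i} < #(B i) → g i ∈ B i := by
  classical
  let g : ι → α := (IsWellFounded.wf (r := r)).fix fun i rec =>
    Classical.epsilon fun x => x ∈ B i ∧ ∀ j (hj : r j i), rec j hj ≠ x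
  have hg : ∀ i, #{j // r j i} < #(B i) → g i ∈ B i ∧ ∀ j, r j i → g j ≠ g i := by
    intro i hi
    have hex : ∃ x, x ∈ B i ∧ ∀ j, r j i → g j ≠ x := by
      by_contra! hcover
      have : B i ⊆ Set.range fun j : {j // r j i} => g j := fun x hx => by
        obtain ⟨j, hj, rfl⟩ := hcover x hx
        exact ⟨⟨j, hj⟩, rfl⟩
      exact not_lt.2 (mk_le_mk_of_subset this |>.trans mk_range_le) hi
    rw [show g i = _ from IsWellFounded.wf.fix_eq _ i]
    exact Classical.epsilon_spec hex
  refine ⟨g, fun i hi j hj hij => ?_, fun i hi => (hg i hi).1⟩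
  rcases trichotomous_of r i j with h | h | h
  · exact absurd hij ((hg j hj).2 i h)
  · exact h
  · exact absurd hij.symm ((hg i hi).2 j h)

namespace UAPaper

theorem IsOrd.isOrdinal {x : ZS} (hx : IsOrd x) : x.IsOrdinal :=
  ZFSet.isOrdinal_iff_forall_mem_isTransitive.2 hx

theorem IsOrd.subset_of_mk_lt {x y : ZS} (hx : IsOrd x) (hy : IsOrd y)
    (h : #x.toSet < #y.toSet) : x ⊆ y :=
  (hy.isOrdinal.mem_or_subset hx.isOrdinal).resolve_left fun hyx =>
    (mk_le_mk_of_subset (ZFSet.coe_subset_coe.2 (hx.1 y hyx))).not_gt h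

theorem IsCardZ.subset_of_mk_le {x y : ZS} (hx : IsCardZ x) (hy : IsOrd y)
    (h : #x.toSet ≤ #y.toSet) : x ⊆ y :=
  (hy.isOrdinal.mem_or_subset hx.1.isOrdinal).resolve_left fun hyx => (hx.2 y hyx).not_ge h

theorem isFuncTo_of_isFunc {F A B : ZS} (hF : ZFSet.IsFunc A B F) : IsFuncTo F A B := by
  obtain ⟨hsub, huniq⟩ := hF
  refine ⟨⟨fun p hp => ?_, huniq⟩, fun x y hxy => (ZFSet.pair_mem_prod.1 (hsub hxy)).2⟩
  obtain ⟨x, hx, y, -, rfl⟩ := ZFSet.mem_prod.1 (hsub hp)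
  exact ⟨x, hx, y, rfl⟩

def liftSet (A : ZS) (s : Set {x // x ∈ A}) : ZS :=
  ZFSet.sep (fun x => ∀ h : x ∈ A, ⟨x, h⟩ ∈ s) A

theorem mem_liftSet {A x : ZS} {s : Set {x // x ∈ A}} :
    x ∈ liftSet A s ↔ ∃ h : x ∈ A, ⟨x, h⟩ ∈ s := by
  simp only [liftSet, ZFSet.mem_sep]
  exact ⟨fun ⟨h, hs⟩ => ⟨h, hs h⟩, fun ⟨h, hs⟩ => ⟨h, fun _ => hs⟩⟩

theorem liftSet_subset {A : ZS} (s : Set {x // x ∈ A}) : liftSet A s ⊆ A :=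
  fun _ hx => (mem_liftSet.1 hx).1

theorem liftSet_mono {A : ZS} {s t : Set {x // x ∈ A}} (hst : s ⊆ t) :
    liftSet A s ⊆ liftSet A t := fun _ hx =>
  let ⟨h, hs⟩ := mem_liftSet.1 hx
  mem_liftSet.2 ⟨h, hst hs⟩

theorem liftSet_univ (A : ZS) : liftSet A Set.univ = A :=
  ZFSet.ext fun _ => by simp [mem_liftSet]

theorem liftSet_empty (A : ZS) : liftSet A ∅ = ∅ :=
  ZFSet.ext fun _ => by simp [mem_liftSet]

theorem liftSet_inter {A : ZS} (s t : Set {x // x ∈ A}) :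
    liftSet A (s ∩ t) = liftSet A s ∩ liftSet A t :=
  ZFSet.ext fun _ => by
    simp only [ZFSet.mem_inter, mem_liftSet]
    exact ⟨fun ⟨h, hs, ht⟩ => ⟨⟨h, hs⟩, h, ht⟩, fun ⟨⟨h, hs⟩, _, ht⟩ => ⟨h, hs, ht⟩⟩

theorem liftSet_compl {A : ZS} (s : Set {x // x ∈ A}) : liftSet A sᶜ = A \ liftSet A s :=
  ZFSet.ext fun _ => by
    simp only [ZFSet.mem_sdiff, mem_liftSet, Set.mem_compl_iff, not_exists]
    exact ⟨fun ⟨h, hs⟩ => ⟨h, fun _ => hs⟩, fun ⟨h, hs⟩ => ⟨h, hs h⟩⟩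

namespace IsUF

variable {D A : ZS}

def toUltrafilter (hD : IsUF D A) : Ultrafilter {x // x ∈ A} :=
  Ultrafilter.ofComplNotMemIff
    { sets := {s | liftSet A s ∈ D}
      univ_sets := show liftSet A Set.univ ∈ D by rw [liftSet_univ]; exact hD.univ_mem
      sets_of_superset := fun hs hst =>
        hD.superset_mem _ hs _ (liftSet_mono hst) (liftSet_subset _)
      inter_sets := fun {s t} hs ht =>
        show liftSet A (s ∩ t) ∈ D by rw [liftSet_inter]; exact hD.inter_mem _ hs _ ht }
    fun s => by
      refine ⟨fun h => (hD.total _ (liftSet_subset s)).resolve_right fun hc => h ?_,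
        fun hs hc => hD.empty_not_mem ?_⟩
      · exact show liftSet A sᶜ ∈ D by rw [liftSet_compl]; exact hc
      · rw [← liftSet_empty A, ← Set.inter_compl_self s, liftSet_inter]
        exact hD.inter_mem _ hs _ hc

end IsUF

theorem IsCCUF.countableInterFilter {D A : ZS} (hD : IsCCUF D A) :
    CountableInterFilter (hD.1.toUltrafilter : Filter {x // x ∈ A}) := by
  refine ⟨fun S hS hmem => ?_⟩
  rcases S.eq_empty_or_nonempty with rfl | hne
  · simp
  obtain ⟨s, rfl⟩ := hS.exists_eq_range hne
  refine hD.1.superset_mem _ (hD.2 (fun n => liftSet A (s n)) fun n => hmem _ ⟨n, rfl⟩) _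
    (fun x hx => ?_) (liftSet_subset _)
  obtain ⟨hxA, hxs⟩ := ZFSet.mem_sep.1 hx
  exact mem_liftSet.2 ⟨hxA, Set.mem_sInter.2 fun _ ⟨n, hn⟩ =>
    hn ▸ (mem_liftSet.1 (hxs n)).2⟩

theorem mem_zimage {j : ZS → ZS} {A y : ZS} : y ∈ zimage j A ↔ ∃ x ∈ A, j x = y :=
  @ZFSet.mem_image j (Classical.allZFSetDefinable _) A y

open scoped Classical in
theorem exists_codesFn (A : ZS) (f : Fn A) : ∃ G, CodesFn G A f := by
  refine ⟨zimage (fun x => if h : x ∈ A then ZFSet.pair x (f ⟨x, h⟩) else ∅) A,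
    fun p hp => ?_, fun x h => mem_zimage.2 ⟨x, h, dif_pos h⟩⟩
  obtain ⟨x, hx, rfl⟩ := mem_zimage.1 hp
  exact ⟨x, hx, dif_pos hx⟩

section Rep

variable {D A : ZS} (hD : IsUF D A)
include hD

theorem rep_iff {a : ZS} {f : Fn A} :
    Rep D A a f ↔
      (∀ b ∈ a, ∃ g : Fn A, (∀ᶠ p in hD.toUltrafilter, g p ∈ f p) ∧ Rep D A b g) ∧
      ∀ g : Fn A, (∀ᶠ p in hD.toUltrafilter, g p ∈ f p) → ∃ b ∈ a, Rep D A b g := by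
  -- `memSet A g f ∈ D` is `∀ᶠ p in hD.toUltrafilter, g p ∈ f p` by definition, and every `g`
  -- has a code, so unfolding `RepIn` once gives the claim.
  have hcode (g : Fn A) : ∃ G, True ∧ CodesFn G A g :=
    (exists_codesFn A g).imp fun _ h => ⟨trivial, h⟩
  rw [Rep, RepIn, WellFounded.fix_eq]
  refine ⟨fun ⟨h1, h2⟩ => ⟨fun b hb => ?_, fun g hg => ?_⟩,
    fun ⟨h1, h2⟩ => ⟨fun b hb => ?_, fun g _ hg => ?_⟩⟩
  · obtain ⟨g, -, hg, hb⟩ := h1 b hb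
    exact ⟨g, hg, hb⟩
  · obtain ⟨b, hb, hg⟩ := h2 g (hcode g) hg
    exact ⟨b, hb, hg⟩
  · obtain ⟨g, hg, hb⟩ := h1 b hb
    exact ⟨g, hcode g, hg, hb⟩
  · obtain ⟨b, hb, hg⟩ := h2 g hg
    exact ⟨b, hb, hg⟩

omit hD in
theorem rep_unique {a b : ZS} {f : Fn A} (ha : Rep D A a f) (hb : Rep D A b f) : a = b := by
  induction a using ZFSet.mem_wf.induction generalizing b f with
  | _ a IH =>
  rw [Rep, RepIn, WellFounded.fix_eq] at ha hb
  refine ZFSet.ext fun c => ⟨fun hc => ?_, fun hc => ?_⟩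
  · obtain ⟨g, hcode, hg, hcg⟩ := ha.1 c hc
    obtain ⟨c', hc', hc'g⟩ := hb.2 g hcode hg
    exact IH c hc hcg hc'g ▸ hc'
  · obtain ⟨g, hcode, hg, hcg⟩ := hb.1 c hc
    obtain ⟨c', hc', hc'g⟩ := ha.2 g hcode hg
    exact (IH c' hc' hc'g hcg).symm ▸ hc'

theorem rep_congr {a : ZS} {f g : Fn A} (hfg : f =ᶠ[hD.toUltrafilter] g)
    (ha : Rep D A a f) : Rep D A a g := by
  rw [rep_iff hD] at ha ⊢
  refine ⟨fun b hb => ?_, fun h hh => ha.2 h ?_⟩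
  · obtain ⟨h, hh, hb⟩ := ha.1 b hb
    exact ⟨h, by filter_upwards [hh, hfg] with p hp hfgp using hfgp ▸ hp, hb⟩
  · filter_upwards [hh, hfg] with p hp hfgp using hfgp ▸ hp

theorem eventuallyEq_of_rep {a : ZS} {f g : Fn A} (hf : Rep D A a f) (hg : Rep D A a g) :
    f =ᶠ[hD.toUltrafilter] g := by
  induction a using ZFSet.mem_wf.induction generalizing f g with
  | _ a IH =>
  -- If almost always `w p ∈ f p \ g p`, then `[w]` is an element `b ∈ a`; the representative of
  -- `b` below `g` agrees with `w` by induction, so also almost always `w p ∈ g p`.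
  have key (f g : Fn A) (hf : Rep D A a f) (hg : Rep D A a g) (w : Fn A) :
      ¬ ∀ᶠ p in hD.toUltrafilter, w p ∈ f p ∧ w p ∉ g p := fun hw => by
    obtain ⟨b, hb, hbw⟩ := ((rep_iff hD).1 hf).2 w (hw.mono fun _ => And.left)
    obtain ⟨h, hhg, hbh⟩ := ((rep_iff hD).1 hg).1 b hb
    obtain ⟨p, ⟨-, hp⟩, hwh, hhp⟩ := (hw.and ((IH b hb hbw hbh).and hhg)).exists
    exact hp (hwh ▸ hhp)
  by_contra hne
  have hdiff (p) (hp : f p ≠ g p) : ∃ z, ¬(z ∈ f p ↔ z ∈ g p) := by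
    by_contra! H
    exact hp (ZFSet.ext H)
  choose! w hw using hdiff
  have hsymm : ∀ᶠ p in hD.toUltrafilter,
      (w p ∈ f p ∧ w p ∉ g p) ∨ (w p ∈ g p ∧ w p ∉ f p) := by
    filter_upwards [Ultrafilter.eventually_not.2 hne] with p hp
    have := hw p hp
    tauto
  rcases Ultrafilter.eventually_or.1 hsymm with h | h
  · exact key f g hf hg w h
  · exact key g f hg hf w h

theorem rep_mem_iff {a b : ZS} {f g : Fn A} (ha : Rep D A a f) (hb : Rep D A b g) :
    a ∈ b ↔ ∀ᶠ p in hD.toUltrafilter, f p ∈ g p := by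
  refine ⟨fun hab => ?_, fun hfg => ?_⟩
  · obtain ⟨h, hhg, hah⟩ := ((rep_iff hD).1 hb).1 a hab
    filter_upwards [hhg, eventuallyEq_of_rep hD ha hah] with p hp hfh using hfh ▸ hp
  · obtain ⟨a', ha', ha'f⟩ := ((rep_iff hD).1 hb).2 f hfg
    exact rep_unique ha ha'f ▸ ha'

theorem rep_pair {a b : ZS} {f g : Fn A} (ha : Rep D A a f) (hb : Rep D A b g) :
    Rep D A {a, b} fun p => {f p, g p} := by
  refine (rep_iff hD).2 ⟨fun c hc => ?_, fun h hh => ?_⟩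
  · rcases ZFSet.mem_pair.1 hc with rfl | rfl
    · exact ⟨f, .of_forall fun p => ZFSet.mem_pair.2 (Or.inl rfl), ha⟩
    · exact ⟨g, .of_forall fun p => ZFSet.mem_pair.2 (Or.inr rfl), hb⟩
  · simp only [ZFSet.mem_pair] at hh
    rcases Ultrafilter.eventually_or.1 hh with hf | hg
    · exact ⟨a, ZFSet.mem_pair.2 (Or.inl rfl), rep_congr hD (EventuallyEq.symm hf) ha⟩
    · exact ⟨b, ZFSet.mem_pair.2 (Or.inr rfl), rep_congr hD (EventuallyEq.symm hg) hb⟩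

theorem rep_singleton {a : ZS} {f : Fn A} (ha : Rep D A a f) :
    Rep D A {a} fun p => {f p} := by
  have hpair_self (x : ZS) : ({x, x} : ZS) = {x} := ZFSet.ext fun _ => by simp
  simpa only [hpair_self] using rep_pair hD ha ha

theorem rep_opair {a b : ZS} {f g : Fn A} (ha : Rep D A a f) (hb : Rep D A b g) :
    Rep D A (ZFSet.pair a b) fun p => ZFSet.pair (f p) (g p) :=
  rep_pair hD (rep_singleton hD ha) (rep_pair hD ha hb)

end Rep

theorem IsCCUF.exists_rep_id_eq {D A ξ : ZS} (hD : IsCCUF D A) [Countable {x // x ∈ A}]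
    {j : ZS → ZS} (hj : ∀ x, Rep D A (j x) fun _ => x) (hξ : Rep D A ξ fun p => p.1) :
    ∃ α ∈ A, ξ = j α := by
  have := hD.countableInterFilter
  obtain ⟨α, hα⟩ := hD.1.toUltrafilter.exists_eq_pure_of_countable
  have hid : (fun p : {x // x ∈ A} => p.1) =ᶠ[hD.1.toUltrafilter] fun _ => α.1 := by
    rw [hα]
    exact Ultrafilter.mem_pure.2 rfl
  exact ⟨α.1, α.2, rep_unique (rep_congr hD.1 hid hξ) (hj α.1)⟩

theorem exists_isFuncTo_pair_mem_of_injOn {ι : Type*} [Nonempty ι] {g : ι → ZS} {W : Set ι}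
    (hg : Set.InjOn g W) {A B : ZS} (v : ι → ZS) (hv : ∀ i, v i ∈ B) :
    ∃ F, IsFuncTo F A B ∧ ∀ i ∈ W, g i ∈ A → ZFSet.pair (g i) (v i) ∈ F := by
  let φ : ZS → ZS := fun y => v (Function.invFunOn g W y)
  refine ⟨@ZFSet.map φ (Classical.allZFSetDefinable _) A, isFuncTo_of_isFunc <|
    (@ZFSet.map_isFunc _ (Classical.allZFSetDefinable _) _ _).2 fun y _ => hv _,
    fun i hi hgi => (@ZFSet.mem_map _ (Classical.allZFSetDefinable _) _ _).2 ⟨g i, hgi, ?_⟩⟩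
  rw [show φ (g i) = v i from congrArg v (hg.leftInvOn_invFunOn hi)]

theorem statement13_general (γ lam : ZS) (hγ : IsOrd γ) (hlam : IsCardZ lam) (hgle : γ ∈ lam)
    (D : ZS) (hD : IsCCUF D γ)
    (jD : ZS → ZS) (hjD : ∀ x, Rep D γ (jD x) (fun _ => x))
    (γ1 : ZS) (hγ1 : CardSuccOf γ γ1)
    (A' : ZS) (hA'M : InUlt D γ A')
    (hsup : ∀ x ∈ γ1, jD x ∈ A')
    (hclosed : ∀ F : ZS, IsFuncTo F lam lam → ∀ ξ ∈ A', ∀ y, ZFSet.pair ξ y ∈ jD F → y ∈ A')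
    (ξ : ZS) (hξ : Rep D γ ξ (fun p => p.1)) :
    ξ ∈ A' := by
  have hγγ1 : γ ⊆ γ1 := hγ.subset_of_mk_lt hγ1.1.1 (hγ1.2 ▸ Order.lt_succ _)
  by_cases hγc : Countable {x // x ∈ γ}
  · obtain ⟨α, hα, rfl⟩ := hD.exists_rep_id_eq hjD hξ
    exact hsup α (hγγ1 hα)
  have hinf : ℵ₀ ≤ #{x // x ∈ γ} := (aleph0_lt_mk_iff.2 (not_countable_iff.1 hγc)).le
  have hγ1lam : γ1 ⊆ lam :=
    hγ1.1.subset_of_mk_le hlam.1 (hγ1.2 ▸ Order.succ_le_of_lt (hlam.2 γ hgle))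
  set U := hD.1.toUltrafilter
  obtain ⟨fA, hfA⟩ := hA'M
  set B : {x // x ∈ γ} → Set ZS := fun p => (fA p).toSet ∩ γ1.toSet
  have hB : ∀ᶠ p in U, #{x // x ∈ γ} < #(B p) :=
    U.eventually_lt_mk_of_forall_mem hinf le_rfl (hγ1.2 ▸ Order.lt_succ _) fun x hx => by
      filter_upwards [(rep_mem_iff hD.1 (hjD x) hfA).1 (hsup x hx)] with p hp using ⟨hp, hx⟩
  have := hγ.isOrdinal.isWellOrder
  obtain ⟨g, hginj, hgB⟩ := exists_injOn_mem_of_mk_lt (Subrel (· ∈ ·) (· ∈ γ)) B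
  have hW : ∀ᶠ p in U, #{q // Subrel (· ∈ ·) (· ∈ γ) q p} < #(B p) :=
    hB.mono fun p hp => (mk_subtype_le _).trans_lt hp
  have : Nonempty {x // x ∈ γ} := hW.exists.nonempty
  obtain ⟨F, hF, hgF⟩ := exists_isFuncTo_pair_mem_of_injOn hginj (A := lam) Subtype.val
    fun p => hlam.1.1 γ hgle p.2
  obtain ⟨ξ', hξ'A, hξ'⟩ := ((rep_iff hD.1).1 hfA).2 g (hW.mono fun p hp => (hgB p hp).1)
  refine hclosed F hF ξ' hξ'A ξ ((rep_mem_iff hD.1 (rep_opair hD.1 hξ' hξ) (hjD F)).2 ?_)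
  exact hW.mono fun p hp => hgF p hp (hγ1lam (hgB p hp).2)

/-- the key step of the club lemma. -/
theorem statement13 (γ lam : ZS) (hγ : IsOrd γ) (hlam : IsCardZ lam) (hgle : γ ∈ lam)
    (D : ZS) (hD : IsCCUF D γ)
    (jD : ZS → ZS) (hjD : ∀ x, Rep D γ (jD x) (fun _ => x))
    (γ1 : ZS) (hγ1 : CardSuccOf γ γ1)
    (A' : ZS) (hA'M : InUlt D γ A') (hords : ∀ x ∈ A', IsOrd x)
    (hsup : ∀ x ∈ γ1, jD x ∈ A')
    (hclosed : ∀ F : ZS, IsFuncTo F lam lam → ∀ ξ ∈ A', ∀ y, ZFSet.pair ξ y ∈ jD F → y ∈ A')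
    (ξ : ZS) (hξ : Rep D γ ξ (fun p => p.1)) :
    ξ ∈ A' :=
  statement13_general γ lam hγ hlam hgle D hD jD hjD γ1 hγ1 A' hA'M hsup hclosed ξ hξ

end UAPaper
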